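/- Let n ≥ 2 and d = n+1. Let H : ℝ^n \ {0} → ℝ satisfy the C-Z(1)(i) condition (H ∈ C¹(ℝ^n \ {0}) with |∇_x^j ∂_t^k H(x,t)| ≤ C_{j,k} ‖(x,t)‖^{-d-j-2k} for 0 ≤ j+k ≤ 1), odd in the space variable, and let A : ℝ^n → ℝ be Lip(1,1/2) with ‖∇_x A‖_{L^∞} ≤ M. Let B be the parabolic ball of radius 1 centered at 𝐱_B, and let η_B be smooth with 0 ≤ η_B ≤ 1, η_B ≡ 1 on 4B, and η_B supported in 5B. Fix φ ∈ C_0^∞((1/4,1)) with ∫_0^∞ φ(ρ) dρ/ρ = 1. Then there is a constant C, depending only on n, φ, and the constants C_{j,k} (in particular independent of M, ε, and B) such that for all 0 < ε < 1 and all 𝐱 ∈ B, | ∫_{‖𝐱−𝐲‖>ε} cos((A(𝐱)−A(𝐲))/‖𝐱−𝐲‖) H(𝐱−𝐲) η_B(𝐲) d𝐲 − ∫_ε^1 ∫_{ℝ^n} φ(‖𝐱−𝐲‖/δ) cos((A(𝐱)−A(𝐲))/‖𝐱−𝐲‖) H(𝐱−𝐲) d𝐲 (dδ/δ) | ≤ C.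 -/

import Mathlib

open MeasureTheory
open scoped ENNReal RealInnerProductSpace

noncomputable section

/-- The parabolic norm `‖(x,t)‖ = (|x|⁴ + t²)^(1/4)` on space-time `ℝ^m × ℝ`. -/
def pnorm {m : ℕ} (p : EuclideanSpace ℝ (Fin m) × ℝ) : ℝ :=
  (‖p.1‖ ^ 4 + p.2 ^ 2) ^ ((4 : ℝ)⁻¹)

/-- The parabolic C-Z(N)(i) condition with homogeneous dimension `d` and constants `C j k`:
`C^N` smoothness away from the origin, together with the bounds
`|∇_x^j ∂_t^k H(x,t)| ≤ C j k * ‖(x,t)‖^(-d-j-2k)` for all `0 ≤ j+k ≤ N`. -/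
def CZCond {m : ℕ} {F : Type*} [NormedAddCommGroup F] [NormedSpace ℝ F]
    (d : ℝ) (N : ℕ) (C : ℕ → ℕ → ℝ) (H : EuclideanSpace ℝ (Fin m) × ℝ → F) : Prop :=
  ContDiffOn ℝ N H {p | p ≠ 0} ∧
  ∀ j k : ℕ, j + k ≤ N → ∀ (x : EuclideanSpace ℝ (Fin m)) (t : ℝ),
    (x, t) ≠ 0 →
    ‖iteratedFDeriv ℝ j (fun y => iteratedDeriv k (fun s => H (y, s)) t) x‖
      ≤ C j k * pnorm (x, t) ^ (-d - j - 2 * k)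

namespace S13

variable {m : ℕ}

lemma pnorm_nonneg (p : EuclideanSpace ℝ (Fin m) × ℝ) : 0 ≤ pnorm p :=
  Real.rpow_nonneg (by positivity) _

lemma pnorm_pow_four (p : EuclideanSpace ℝ (Fin m) × ℝ) :
    pnorm p ^ (4:ℕ) = ‖p.1‖ ^ 4 + p.2 ^ 2 := by
  rw [pnorm, ← Real.rpow_natCast ((‖p.1‖ ^ 4 + p.2 ^ 2) ^ ((4:ℝ)⁻¹)) 4,
    ← Real.rpow_mul (by positivity)]
  norm_num

lemma pnorm_zero : pnorm (0 : EuclideanSpace ℝ (Fin m) × ℝ) = 0 := by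
  have : pnorm (0 : EuclideanSpace ℝ (Fin m) × ℝ) = ((0:ℝ)) ^ ((4:ℝ)⁻¹) := by
    simp [pnorm]
  rw [this, Real.zero_rpow (by norm_num)]

lemma pnorm_pos {p : EuclideanSpace ℝ (Fin m) × ℝ} (hp : p ≠ 0) : 0 < pnorm p := by
  have hbase : 0 < ‖p.1‖ ^ 4 + p.2 ^ 2 := by
    rcases eq_or_ne p.1 0 with h1 | h1
    · have h2 : p.2 ≠ 0 := by
        intro h2; exact hp (Prod.ext h1 h2)
      have : 0 < p.2 ^ 2 := by positivity
      positivity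
    · have : 0 < ‖p.1‖ := norm_pos_iff.2 h1
      positivity
  exact Real.rpow_pos_of_pos hbase _

lemma pnorm_fst_le (p : EuclideanSpace ℝ (Fin m) × ℝ) : ‖p.1‖ ≤ pnorm p := by
  refine le_of_pow_le_pow_left₀ (n := 4) (by norm_num) (pnorm_nonneg p) ?_
  rw [pnorm_pow_four]
  nlinarith [sq_nonneg p.2]

lemma pnorm_snd_le (p : EuclideanSpace ℝ (Fin m) × ℝ) : |p.2| ≤ pnorm p ^ 2 := by
  have h4 := pnorm_pow_four p
  have h2 : (0:ℝ) ≤ pnorm p ^ 2 := by positivity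
  nlinarith [abs_nonneg p.2, sq_abs p.2, pow_nonneg (norm_nonneg p.1) 4]

lemma pnorm_add_le (a b : EuclideanSpace ℝ (Fin m) × ℝ) :
    pnorm (a + b) ≤ 2 * (pnorm a + pnorm b) := by
  have hPA := pnorm_nonneg a
  have hPB := pnorm_nonneg b
  refine le_of_pow_le_pow_left₀ (n := 4) (by norm_num) (by positivity) ?_
  rw [pnorm_pow_four]
  have h1 : ‖(a + b).1‖ ≤ pnorm a + pnorm b := by
    calc ‖(a + b).1‖ = ‖a.1 + b.1‖ := rfl
    _ ≤ ‖a.1‖ + ‖b.1‖ := norm_add_le _ _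
    _ ≤ pnorm a + pnorm b := add_le_add (pnorm_fst_le a) (pnorm_fst_le b)
  have h1' : ‖(a + b).1‖ ^ 4 ≤ (pnorm a + pnorm b) ^ 4 :=
    pow_le_pow_left₀ (norm_nonneg _) h1 4
  have h2 : (a + b).2 = a.2 + b.2 := rfl
  have ha2 : a.2 ^ 2 ≤ pnorm a ^ 4 := by
    have := pnorm_pow_four a; nlinarith [pow_nonneg (norm_nonneg a.1) 4]
  have hb2 : b.2 ^ 2 ≤ pnorm b ^ 4 := by
    have := pnorm_pow_four b; nlinarith [pow_nonneg (norm_nonneg b.1) 4]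
  rw [h2]
  nlinarith [sq_nonneg (a.2 - b.2), sq_nonneg (pnorm a + pnorm b),
    pow_nonneg (add_nonneg hPA hPB) 4, sq_nonneg (pnorm a - pnorm b),
    mul_nonneg hPA hPB, sq_nonneg (pnorm a * pnorm b)]

lemma pnorm_neg (a : EuclideanSpace ℝ (Fin m) × ℝ) : pnorm (-a) = pnorm a := by
  simp [pnorm]

lemma continuous_pnorm : Continuous (pnorm (m := m)) := by
  have h : Continuous fun p : EuclideanSpace ℝ (Fin m) × ℝ => ‖p.1‖ ^ 4 + p.2 ^ 2 := by
    fun_prop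
  exact h.rpow_const (fun x => Or.inr (by norm_num))

/-- normalization constant -/
def kap (m : ℕ) : ℝ := 2 * (volume (Metric.closedBall (0 : EuclideanSpace ℝ (Fin m)) 1)).toReal

lemma kap_nonneg : 0 ≤ kap m := by
  unfold kap; positivity

lemma volume_pnorm_le (p : EuclideanSpace ℝ (Fin m) × ℝ) {r : ℝ} (hr : 0 ≤ r) :
    volume {q : EuclideanSpace ℝ (Fin m) × ℝ | pnorm (p - q) ≤ r} ≤
      ENNReal.ofReal (kap m * r ^ (m + 2)) := by
  have hsub : {q : EuclideanSpace ℝ (Fin m) × ℝ | pnorm (p - q) ≤ r} ⊆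
      Metric.closedBall p.1 r ×ˢ Set.Icc (p.2 - r ^ 2) (p.2 + r ^ 2) := by
    intro q hq
    simp only [Set.mem_setOf_eq] at hq
    constructor
    · have h1 : ‖p.1 - q.1‖ ≤ r := le_trans (pnorm_fst_le (p - q)) hq
      simp only [Metric.mem_closedBall, dist_eq_norm]
      rwa [norm_sub_rev]
    · have h2 : |p.2 - q.2| ≤ pnorm (p - q) ^ 2 := pnorm_snd_le (p - q)
      have h3 : pnorm (p - q) ^ 2 ≤ r ^ 2 :=
        pow_le_pow_left₀ (pnorm_nonneg _) hq 2
      have h5 := abs_le.1 (le_trans h2 h3)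
      exact Set.mem_Icc.2 ⟨by linarith [h5.1], by linarith [h5.2]⟩
  refine le_trans (measure_mono hsub) ?_
  rw [Measure.volume_eq_prod, Measure.prod_prod]
  rw [Measure.addHaar_closedBall' volume p.1 hr, Real.volume_Icc]
  have hV : (volume (Metric.closedBall (0 : EuclideanSpace ℝ (Fin m)) 1)) ≠ ⊤ :=
    (measure_closedBall_lt_top).ne
  rw [← ENNReal.ofReal_toReal hV]
  rw [← ENNReal.ofReal_mul (by positivity), ← ENNReal.ofReal_mul (by positivity)]
  apply ENNReal.ofReal_le_ofReal
  rw [finrank_euclideanSpace_fin]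
  have : p.2 + r ^ 2 - (p.2 - r ^ 2) = 2 * r ^ 2 := by ring
  rw [this, kap]
  rw [pow_add]
  ring_nf
  nlinarith [pow_nonneg hr m, ENNReal.toReal_nonneg
    (a := volume (Metric.closedBall (0 : EuclideanSpace ℝ (Fin m)) 1)), sq_nonneg r]

lemma volume_pnorm_toReal_le (p : EuclideanSpace ℝ (Fin m) × ℝ) {r : ℝ} (hr : 0 ≤ r)
    {s : Set (EuclideanSpace ℝ (Fin m) × ℝ)}
    (hs : s ⊆ {q | pnorm (p - q) ≤ r}) :
    (volume s).toReal ≤ kap m * r ^ (m + 2) :=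
  ENNReal.toReal_le_of_le_ofReal (mul_nonneg kap_nonneg (pow_nonneg hr _))
    (le_trans (measure_mono hs) (volume_pnorm_le p hr))

lemma volume_pnorm_lt_top (p : EuclideanSpace ℝ (Fin m) × ℝ) {r : ℝ} (hr : 0 ≤ r)
    {s : Set (EuclideanSpace ℝ (Fin m) × ℝ)} (hs : s ⊆ {q | pnorm (p - q) ≤ r}) :
    volume s < ⊤ :=
  lt_of_le_of_lt (le_trans (measure_mono hs) (volume_pnorm_le p hr)) ENNReal.ofReal_lt_top


lemma phi_vanish {φ : ℝ → ℝ} (hφsupp : tsupport φ ⊆ Set.Ioo (4⁻¹ : ℝ) 1)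
    {x : ℝ} (hx : x ∉ Set.Ioo (4⁻¹ : ℝ) 1) : φ x = 0 :=
  image_eq_zero_of_notMem_tsupport (fun h => hx (hφsupp h))

lemma phi_int_zero_of_small {φ : ℝ → ℝ} (hφsupp : tsupport φ ⊆ Set.Ioo (4⁻¹ : ℝ) 1)
    {ε r c : ℝ} (hr0 : 0 ≤ r) (hr : 4 * r ≤ ε) :
    ∫ δ in Set.Ioc ε 1, φ (r / δ) * c / δ = 0 := by
  rw [setIntegral_congr_fun measurableSet_Ioc (g := fun _ => (0:ℝ))]
  · simp
  · intro δ hδ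
    have hδ0 : 0 < δ := lt_of_le_of_lt (le_trans (by linarith) hr) hδ.1
    have h1 : r / δ ≤ 4⁻¹ := by
      rw [div_le_iff₀ hδ0]
      nlinarith [hδ.1]
    have : φ (r / δ) = 0 := phi_vanish hφsupp (by
      simp only [Set.mem_Ioo, not_and_or, not_lt]
      exact Or.inl h1)
    simp [this]

lemma phi_int_zero_of_one_le {φ : ℝ → ℝ} (hφsupp : tsupport φ ⊆ Set.Ioo (4⁻¹ : ℝ) 1)
    {ε r c : ℝ} (hε : 0 < ε) (hr : 1 ≤ r) :
    ∫ δ in Set.Ioc ε 1, φ (r / δ) * c / δ = 0 := by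
  rw [setIntegral_congr_fun measurableSet_Ioc (g := fun _ => (0:ℝ))]
  · simp
  · intro δ hδ
    have hδ0 : 0 < δ := lt_trans hε hδ.1
    have h1 : (1:ℝ) ≤ r / δ := by
      rw [le_div_iff₀ hδ0]
      nlinarith [hδ.2]
    have : φ (r / δ) = 0 := phi_vanish hφsupp (by
      simp only [Set.mem_Ioo, not_and_or, not_lt]
      exact Or.inr (by linarith))
    simp [this]

lemma key_phi_int_bound {φ : ℝ → ℝ} (hφc : Continuous φ)
    (hφsupp : tsupport φ ⊆ Set.Ioo (4⁻¹ : ℝ) 1)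
    {Φ : ℝ} (hΦ : ∀ x, |φ x| ≤ Φ)
    {ε r c : ℝ} (hε : 0 < ε) (hr : 0 < r) :
    ‖∫ δ in Set.Ioc ε 1, φ (r / δ) * c / δ‖ ≤ 3 * Φ * |c| := by
  have hΦ0 : 0 ≤ Φ := le_trans (abs_nonneg _) (hΦ 0)
  have hne : ∀ δ ∈ Set.Icc ε 1, δ ≠ 0 := fun δ hδ => ne_of_gt (lt_of_lt_of_le hε hδ.1)
  have hI1 : IntegrableOn (fun δ => φ (r / δ) * c / δ) (Set.Ioc ε 1) := by
    apply (ContinuousOn.integrableOn_Icc ?_).mono_set Set.Ioc_subset_Icc_self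
    exact (((hφc.comp_continuousOn (continuousOn_const.div continuousOn_id hne)).mul
      continuousOn_const).div continuousOn_id hne)
  set B : ℝ := Φ * |c| * r⁻¹ with hB
  have hB0 : 0 ≤ B := by positivity
  have hInd : Integrable ((Set.Ioo r (4*r)).indicator fun _ => B) :=
    (integrable_indicator_iff measurableSet_Ioo).2
      (integrableOn_const measure_Ioo_lt_top.ne)
  calc ‖∫ δ in Set.Ioc ε 1, φ (r / δ) * c / δ‖
      ≤ ∫ δ in Set.Ioc ε 1, ‖φ (r / δ) * c / δ‖ := norm_integral_le_integral_norm _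
    _ ≤ ∫ δ in Set.Ioc ε 1, (Set.Ioo r (4*r)).indicator (fun _ => B) δ := by
        apply setIntegral_mono_on hI1.norm hInd.integrableOn measurableSet_Ioc
        intro δ hδ
        have hδ0 : 0 < δ := lt_trans hε hδ.1
        by_cases hzero : φ (r / δ) = 0
        · simp only [hzero, zero_mul, zero_div, norm_zero]
          exact Set.indicator_nonneg (fun _ _ => hB0) δ
        · have hmem : r / δ ∈ Set.Ioo (4⁻¹:ℝ) 1 := by
            by_contra hmem
            exact hzero (phi_vanish hφsupp hmem)
          have h1 : r < δ := (div_lt_one hδ0).1 hmem.2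
          have h2 : δ < 4 * r := by
            have := (lt_div_iff₀ hδ0).1 hmem.1
            linarith
          rw [Set.indicator_of_mem (Set.mem_Ioo.2 ⟨h1, h2⟩)]
          have heq : ‖φ (r / δ) * c / δ‖ = |φ (r / δ)| * |c| / δ := by
            rw [Real.norm_eq_abs, abs_div, abs_mul, abs_of_pos hδ0]
          rw [heq, hB, show Φ * |c| * r⁻¹ = Φ * |c| / r from by rw [div_eq_mul_inv]]
          gcongr
          all_goals first
            | exact hΦ _
            | exact h1.le
            | positivity
    _ ≤ ∫ δ, (Set.Ioo r (4*r)).indicator (fun _ => B) δ :=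
        setIntegral_le_integral hInd
          (Filter.Eventually.of_forall (Set.indicator_nonneg (fun _ _ => hB0)))
    _ = (volume (Set.Ioo r (4*r))).toReal • B := integral_indicator_const _ measurableSet_Ioo
    _ = 3 * Φ * |c| := by
        rw [Real.volume_Ioo, ENNReal.toReal_ofReal (by linarith), smul_eq_mul, hB]
        field_simp
        ring

lemma psi_eq_one {φ : ℝ → ℝ} (hφsupp : tsupport φ ⊆ Set.Ioo (4⁻¹ : ℝ) 1)
    (hφint : ∫ ρ in Set.Ioi (0 : ℝ), φ ρ / ρ = 1)
    {ε r : ℝ} (hε0 : 0 < ε) (hεr : ε < r) (hr : r ≤ 4⁻¹) :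
    ∫ δ in Set.Ioc ε 1, φ (r / δ) / δ = 1 := by
  have hr0 : 0 < r := lt_trans hε0 hεr
  have hvan0 : ∀ δ : ℝ, δ ≤ 0 → φ (r / δ) / δ = 0 := by
    intro δ hδ
    rcases eq_or_lt_of_le hδ with h | h
    · subst h; simp
    · have : r / δ < 0 := div_neg_of_pos_of_neg hr0 h
      rw [phi_vanish hφsupp (by
        simp only [Set.mem_Ioo, not_and_or, not_lt]
        exact Or.inl (by linarith)), zero_div]
  have hvan : ∀ δ : ℝ, δ ∉ Set.Ioc ε 1 → φ (r / δ) / δ = 0 := by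
    intro δ hδ
    simp only [Set.mem_Ioc, not_and_or, not_lt, not_le] at hδ
    rcases hδ with h | h
    · rcases le_or_gt δ 0 with h0 | h0
      · exact hvan0 δ h0
      · have : 1 < r / δ := (one_lt_div h0).2 (lt_of_le_of_lt h hεr)
        rw [phi_vanish hφsupp (by
          simp only [Set.mem_Ioo, not_and_or, not_lt]
          exact Or.inr (by linarith)), zero_div]
    · have hδ0 : 0 < δ := lt_trans one_pos h
      have : r / δ < 4⁻¹ := lt_of_lt_of_le (div_lt_self hr0 h) hr
      rw [phi_vanish hφsupp (by
        simp only [Set.mem_Ioo, not_and_or, not_lt]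
        exact Or.inl this.le), zero_div]
  have e1 : ∫ δ in Set.Ioc ε 1, φ (r / δ) / δ = ∫ δ, φ (r / δ) / δ :=
    setIntegral_eq_integral_of_forall_compl_eq_zero hvan
  have e2 : ∫ δ in Set.Ioi (0:ℝ), φ (r / δ) / δ = ∫ δ, φ (r / δ) / δ :=
    setIntegral_eq_integral_of_forall_compl_eq_zero (by
      intro δ hδ
      simp only [Set.mem_Ioi, not_lt] at hδ
      exact hvan0 δ hδ)
  have himg : (fun δ : ℝ => r / δ) '' Set.Ioi 0 = Set.Ioi 0 := by
    ext u
    simp only [Set.mem_image, Set.mem_Ioi]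
    constructor
    · rintro ⟨δ, hδ, rfl⟩; positivity
    · intro hu; exact ⟨r / u, by positivity, by field_simp⟩
  have hder : ∀ δ ∈ Set.Ioi (0:ℝ), HasDerivWithinAt (fun δ : ℝ => r / δ)
      (-(r / δ^2)) (Set.Ioi 0) δ := by
    intro δ hδ
    have h := (hasDerivAt_inv (ne_of_gt hδ)).const_mul r
    have heq : (fun δ : ℝ => r / δ) = fun δ : ℝ => r * δ⁻¹ := by
      funext x; rw [div_eq_mul_inv]
    rw [heq]
    exact h.hasDerivWithinAt.congr_deriv (by ring)
  have hinj : Set.InjOn (fun δ : ℝ => r / δ) (Set.Ioi 0) := by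
    intro a ha b hb hab
    simp only at hab
    rw [div_eq_mul_inv, div_eq_mul_inv] at hab
    have h' := mul_left_cancel₀ (ne_of_gt hr0) hab
    exact inv_injective h'
  have e3 := integral_image_eq_integral_abs_deriv_smul measurableSet_Ioi hder hinj
    (fun u => φ u / u)
  rw [himg] at e3
  have e4 : ∫ δ in Set.Ioi (0:ℝ), |(-(r / δ^2))| • (φ (r / δ) / (r / δ))
      = ∫ δ in Set.Ioi (0:ℝ), φ (r / δ) / δ := by
    apply setIntegral_congr_fun measurableSet_Ioi
    intro δ hδ
    have hδ0 : (0:ℝ) < δ := hδ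
    dsimp only
    rw [abs_neg, abs_of_pos (show (0:ℝ) < r / δ^2 by positivity), smul_eq_mul]
    field_simp
  rw [e1, ← e2, ← e4, ← e3]
  exact hφint

end S13


open S13 in
set_option maxHeartbeats 1000000 in
/-- replacing the sharply truncated Calderón-type singular integral applied
to the cutoff `η_B` by its smoothly truncated version produces a uniformly bounded error:
for `𝐱` in the (unit radius) parabolic ball `B`, `0 < ε < 1`, a spatially odd
`H ∈ C-Z(1)(i)`, and `A` Lip(1,1/2) with spatial Lipschitz constant at most `M`,
`|𝒯_ε η_B(𝐱) - ∫_ε^1 ∫ φ(‖𝐱-𝐲‖/δ) cos((A(𝐱)-A(𝐲))/‖𝐱-𝐲‖) H(𝐱-𝐲) d𝐲 (dδ/δ)| ≤ C`,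
with `C` independent of `M`, `ε`, `B`. -/
theorem statement13 (n : ℕ) (hn : 2 ≤ n) (CK : ℕ → ℕ → ℝ)
    (φ : ℝ → ℝ) (hφsm : ContDiff ℝ (⊤ : ℕ∞) φ) (hφsupp : tsupport φ ⊆ Set.Ioo (4⁻¹ : ℝ) 1)
    (hφint : ∫ ρ in Set.Ioi (0 : ℝ), φ ρ / ρ = 1) :
    ∃ C : ℝ,  -- depending only on n, φ and the constants CK
    ∀ H : EuclideanSpace ℝ (Fin (n - 1)) × ℝ → ℝ,
      CZCond (n + 1 : ℝ) 1 CK H →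
      (∀ (x : EuclideanSpace ℝ (Fin (n - 1))) (t : ℝ), H (-x, t) = -H (x, t)) →
    ∀ (A : EuclideanSpace ℝ (Fin (n - 1)) × ℝ → ℝ) (M : ℝ),
      (∀ (x y : EuclideanSpace ℝ (Fin (n - 1))) (t : ℝ),
        |A (x, t) - A (y, t)| ≤ M * ‖x - y‖) →
      (∃ c : ℝ, ∀ (x : EuclideanSpace ℝ (Fin (n - 1))) (t s : ℝ),
        |A (x, t) - A (x, s)| ≤ c * |t - s| ^ ((2 : ℝ)⁻¹)) →
    ∀ xB : EuclideanSpace ℝ (Fin (n - 1)) × ℝ,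
    ∀ η : EuclideanSpace ℝ (Fin (n - 1)) × ℝ → ℝ,
      ContDiff ℝ (⊤ : ℕ∞) η → (∀ p, 0 ≤ η p ∧ η p ≤ 1) →
      (∀ p, pnorm (p - xB) < 4 → η p = 1) →
      tsupport η ⊆ {p | pnorm (p - xB) < 5} →
    ∀ ε : ℝ, 0 < ε → ε < 1 →
    ∀ p : EuclideanSpace ℝ (Fin (n - 1)) × ℝ, pnorm (p - xB) < 1 →
      |(∫ q in {q | ε < pnorm (p - q)},
            Real.cos ((A p - A q) / pnorm (p - q)) * H (p - q) * η q)
        - ∫ δ in Set.Ioc ε 1,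
            (∫ q : EuclideanSpace ℝ (Fin (n - 1)) × ℝ, φ (pnorm (p - q) / δ) *
              Real.cos ((A p - A q) / pnorm (p - q)) * H (p - q)) / δ| ≤ C := by
  classical
  have hφcs : HasCompactSupport φ := by
    apply IsCompact.of_isClosed_subset (isCompact_Icc (a := (4:ℝ)⁻¹) (b := 1))
      (isClosed_tsupport φ)
    exact hφsupp.trans Set.Ioo_subset_Icc_self
  obtain ⟨Φ0, hΦ0⟩ := hφcs.exists_bound_of_continuous hφsm.continuous
  set Φ : ℝ := max Φ0 0 with hΦdef
  have hΦ : ∀ x, |φ x| ≤ Φ := fun x =>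
    le_trans (by simpa [Real.norm_eq_abs] using hΦ0 x) (le_max_left _ _)
  have hΦnn : 0 ≤ Φ := le_max_right _ _
  set C00 : ℝ := max (CK 0 0) 0 with hC00def
  have hC00nn : 0 ≤ C00 := le_max_right _ _
  have hm2 : (n - 1) + 2 = n + 1 := by omega
  refine ⟨C00 * kap (n-1) * 4 ^ (n+1) * (3 * Φ + (1 + 3 * Φ) * 12 ^ (n+1)), ?_⟩
  intro H hCZ hodd A M hA1 hA2 xB η hηsm hη01 hη1 hηsupp ε hε0 hε1 p hpB
  -- pointwise bound on H
  have hHb : ∀ a : EuclideanSpace ℝ (Fin (n-1)) × ℝ, a ≠ 0 →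
      |H a| ≤ C00 / pnorm a ^ (n+1) := by
    intro a ha
    have hne : (a.1, a.2) ≠ (0 : EuclideanSpace ℝ (Fin (n-1)) × ℝ) := by
      rw [Prod.mk.eta]; exact ha
    have h0 := hCZ.2 0 0 (by norm_num) a.1 a.2 hne
    simp only [iteratedDeriv_zero, norm_iteratedFDeriv_zero, Prod.mk.eta, Nat.cast_zero,
      mul_zero, sub_zero, CharP.cast_eq_zero] at h0
    have hpa : 0 < pnorm a := pnorm_pos ha
    have hrpow : pnorm a ^ (-((n:ℝ) + 1)) = (pnorm a ^ (n+1 : ℕ))⁻¹ := by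
      rw [Real.rpow_neg hpa.le, ← Real.rpow_natCast (pnorm a) (n+1)]
      push_cast
      ring_nf
    rw [hrpow] at h0
    calc |H a| = ‖H a‖ := (Real.norm_eq_abs _).symm
      _ ≤ CK 0 0 * (pnorm a ^ (n+1 : ℕ))⁻¹ := h0
      _ ≤ C00 * (pnorm a ^ (n+1 : ℕ))⁻¹ :=
          mul_le_mul_of_nonneg_right (le_max_left _ _) (by positivity)
      _ = C00 / pnorm a ^ (n+1) := by rw [div_eq_mul_inv]
  have hAcont : Continuous A := by
    obtain ⟨c, hc⟩ := hA2
    rw [continuous_iff_continuousAt]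
    intro z
    rw [ContinuousAt, tendsto_iff_dist_tendsto_zero]
    have hb : ∀ q : EuclideanSpace ℝ (Fin (n-1)) × ℝ,
        dist (A q) (A z) ≤ M * ‖q.1 - z.1‖ + c * |q.2 - z.2| ^ ((2:ℝ)⁻¹) := by
      intro q
      have t1 := hA1 q.1 z.1 q.2
      have t2 := hc z.1 q.2 z.2
      have hsplit : A q - A z = (A (q.1, q.2) - A (z.1, q.2)) + (A (z.1, q.2) - A (z.1, z.2)) := by
        rw [Prod.mk.eta, Prod.mk.eta]; ring
      calc dist (A q) (A z) = |A q - A z| := Real.dist_eq _ _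
        _ = |(A (q.1, q.2) - A (z.1, q.2)) + (A (z.1, q.2) - A (z.1, z.2))| := by rw [hsplit]
        _ ≤ |A (q.1, q.2) - A (z.1, q.2)| + |A (z.1, q.2) - A (z.1, z.2)| := abs_add_le _ _
        _ ≤ M * ‖q.1 - z.1‖ + c * |q.2 - z.2| ^ ((2:ℝ)⁻¹) := add_le_add t1 t2
    have hgc : Continuous fun q : EuclideanSpace ℝ (Fin (n-1)) × ℝ =>
        M * ‖q.1 - z.1‖ + c * |q.2 - z.2| ^ ((2:ℝ)⁻¹) := by
      apply Continuous.add
      · exact continuous_const.mul (continuous_fst.sub continuous_const).norm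
      · apply continuous_const.mul
        apply Continuous.rpow_const
        · exact (continuous_snd.sub continuous_const).abs
        · intro x; right; norm_num
    have hg : Filter.Tendsto (fun q : EuclideanSpace ℝ (Fin (n-1)) × ℝ =>
        M * ‖q.1 - z.1‖ + c * |q.2 - z.2| ^ ((2:ℝ)⁻¹)) (nhds z) (nhds 0) := by
      have h0 : M * ‖z.1 - z.1‖ + c * |z.2 - z.2| ^ ((2:ℝ)⁻¹) = 0 := by
        simp [Real.zero_rpow]
      have := hgc.tendsto z
      rwa [h0] at this
    exact squeeze_zero (fun q => dist_nonneg) hb hg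
  have hsing : (volume ({p} : Set (EuclideanSpace ℝ (Fin (n-1)) × ℝ))) = 0 := by
    have hps : ({p} : Set (EuclideanSpace ℝ (Fin (n-1)) × ℝ)) = {p.1} ×ˢ {p.2} := by
      rw [Set.singleton_prod_singleton, Prod.mk.eta]
    rw [hps, Measure.volume_eq_prod, Measure.prod_prod, Real.volume_singleton, mul_zero]
  have hrcont : Continuous fun q : EuclideanSpace ℝ (Fin (n-1)) × ℝ => pnorm (p - q) :=
    continuous_pnorm.comp (continuous_const.sub continuous_id)
  have hrpos : ∀ q : EuclideanSpace ℝ (Fin (n-1)) × ℝ, q ≠ p → 0 < pnorm (p - q) := by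
    intro q hq
    exact pnorm_pos (sub_ne_zero.2 (Ne.symm hq))
  set Kf : EuclideanSpace ℝ (Fin (n-1)) × ℝ → ℝ :=
    fun q => Real.cos ((A p - A q) / pnorm (p - q)) * H (p - q) with hKfdef
  have hKb : ∀ q, q ≠ p → |Kf q| ≤ C00 / pnorm (p - q) ^ (n+1) := by
    intro q hq
    have h1 := hHb (p - q) (sub_ne_zero.2 (Ne.symm hq))
    have h2 : |Real.cos ((A p - A q) / pnorm (p - q))| ≤ 1 := Real.abs_cos_le_one _
    rw [hKfdef]
    calc |Real.cos ((A p - A q) / pnorm (p - q)) * H (p - q)|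
        = |Real.cos ((A p - A q) / pnorm (p - q))| * |H (p - q)| := abs_mul _ _
      _ ≤ 1 * (C00 / pnorm (p - q) ^ (n+1)) :=
          mul_le_mul h2 h1 (abs_nonneg _) zero_le_one
      _ = C00 / pnorm (p - q) ^ (n+1) := one_mul _
  have hKae : AEStronglyMeasurable Kf volume := by
    have hco : ContinuousOn Kf {q : EuclideanSpace ℝ (Fin (n-1)) × ℝ | q ≠ p} := by
      rw [hKfdef]
      apply ContinuousOn.mul
      · apply Real.continuous_cos.comp_continuousOn
        apply ContinuousOn.div
        · exact (continuous_const.sub hAcont).continuousOn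
        · exact hrcont.continuousOn
        · intro q hq; exact ne_of_gt (hrpos q hq)
      · apply ContinuousOn.comp (hCZ.1.continuousOn)
          (continuous_const.sub continuous_id).continuousOn
        intro q hq
        exact sub_ne_zero.2 (Ne.symm hq)
    have hmeasne : MeasurableSet {q : EuclideanSpace ℝ (Fin (n-1)) × ℝ | q ≠ p} :=
      isOpen_ne.measurableSet
    have hmem : ∀ᵐ x : EuclideanSpace ℝ (Fin (n-1)) × ℝ ∂volume,
        x ∈ {q : EuclideanSpace ℝ (Fin (n-1)) × ℝ | q ≠ p} := by
      rw [MeasureTheory.ae_iff]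
      have hcompl : {x : EuclideanSpace ℝ (Fin (n-1)) × ℝ |
          ¬ x ∈ {q : EuclideanSpace ℝ (Fin (n-1)) × ℝ | q ≠ p}} = {p} := by
        ext x; simp
      rw [hcompl]
      exact hsing
    have h1 : AEStronglyMeasurable Kf (volume.restrict {q | q ≠ p}) :=
      hco.aestronglyMeasurable hmeasne
    rwa [Measure.restrict_eq_self_of_ae_mem hmem] at h1
  set S : Set (EuclideanSpace ℝ (Fin (n-1)) × ℝ) := {q | ε < pnorm (p - q)} with hSdef
  have hSopen : IsOpen S := isOpen_Ioi.preimage hrcont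
  set F1 : EuclideanSpace ℝ (Fin (n-1)) × ℝ → ℝ :=
    fun q => S.indicator (fun q => Kf q * η q) q with hF1def
  have hηz : ∀ q : EuclideanSpace ℝ (Fin (n-1)) × ℝ, 12 < pnorm (p - q) → η q = 0 := by
    intro q hq
    by_contra hne
    have hmem : q ∈ tsupport η := subset_tsupport η (by simpa [Function.mem_support] using hne)
    have h5 : pnorm (q - xB) < 5 := hηsupp hmem
    have hsplit : p - q = (p - xB) + (xB - q) := by abel
    have := pnorm_add_le (p - xB) (xB - q)
    rw [← hsplit] at this
    have h6 : pnorm (xB - q) = pnorm (q - xB) := by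
      rw [← pnorm_neg (xB - q), neg_sub]
    nlinarith [hq, hpB]
  have hη1' : ∀ q : EuclideanSpace ℝ (Fin (n-1)) × ℝ, pnorm (p - q) ≤ 4⁻¹ → η q = 1 := by
    intro q hq
    apply hη1
    have hsplit : q - xB = (q - p) + (p - xB) := by abel
    have h1 := pnorm_add_le (q - p) (p - xB)
    rw [← hsplit] at h1
    have h2 : pnorm (q - p) = pnorm (p - q) := by
      rw [← pnorm_neg (q - p), neg_sub]
    nlinarith [hpB]
  have hqnep : ∀ q : EuclideanSpace ℝ (Fin (n-1)) × ℝ, 0 < pnorm (p - q) → q ≠ p := by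
    intro q hpos hqq
    rw [hqq, sub_self, pnorm_zero] at hpos
    linarith
  have hF1int : Integrable F1 := by
    have hgmeas : MeasurableSet {q : EuclideanSpace ℝ (Fin (n-1)) × ℝ | pnorm (p - q) ≤ 12} :=
      (isClosed_Iic.preimage hrcont).measurableSet
    have hgint : Integrable
        ({q : EuclideanSpace ℝ (Fin (n-1)) × ℝ | pnorm (p - q) ≤ 12}.indicator
          (fun _ => C00 / ε ^ (n+1))) :=
      (integrable_indicator_iff hgmeas).2 (integrableOn_const
        ((volume_pnorm_lt_top p (by norm_num) (fun q hq => hq)).ne))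
    apply Integrable.mono' hgint
    · rw [hF1def]
      exact (hKae.mul hηsm.continuous.aestronglyMeasurable).indicator hSopen.measurableSet
    apply Filter.Eventually.of_forall
    intro q
    have hindnn : (0:ℝ) ≤ {q : EuclideanSpace ℝ (Fin (n-1)) × ℝ |
        pnorm (p - q) ≤ 12}.indicator (fun _ => C00 / ε ^ (n+1)) q :=
      Set.indicator_nonneg (fun _ _ => by positivity) q
    by_cases hq : q ∈ S
    · have hqe : ε < pnorm (p - q) := hq
      have hqp : q ≠ p := hqnep q (lt_trans hε0 hqe)
      by_cases h12 : pnorm (p - q) ≤ 12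
      · rw [hF1def]
        simp only
        rw [Set.indicator_of_mem hq,
          Set.indicator_of_mem (show q ∈ {q : EuclideanSpace ℝ (Fin (n-1)) × ℝ |
            pnorm (p - q) ≤ 12} from h12)]
        have hη : |η q| ≤ 1 := by
          rw [abs_of_nonneg (hη01 q).1]; exact (hη01 q).2
        calc ‖Kf q * η q‖ = |Kf q| * |η q| := by rw [Real.norm_eq_abs, abs_mul]
          _ ≤ (C00 / pnorm (p - q) ^ (n+1)) * 1 :=
              mul_le_mul (hKb q hqp) hη (abs_nonneg _)
                (div_nonneg hC00nn (pow_nonneg (pnorm_nonneg _) _))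
          _ = C00 / pnorm (p - q) ^ (n+1) := mul_one _
          _ ≤ C00 / ε ^ (n+1) := by gcongr
      · rw [hF1def]
        simp only
        rw [Set.indicator_of_mem hq, hηz q (lt_of_not_ge h12), mul_zero]
        simpa using hindnn
    · rw [hF1def]
      simp only
      rw [Set.indicator_of_notMem hq]
      simpa using hindnn
  have e1 : (∫ q in {q : EuclideanSpace ℝ (Fin (n-1)) × ℝ | ε < pnorm (p - q)},
      Real.cos ((A p - A q) / pnorm (p - q)) * H (p - q) * η q) = ∫ q, F1 q :=
    (integral_indicator hSopen.measurableSet).symm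
  set G : EuclideanSpace ℝ (Fin (n-1)) × ℝ → ℝ :=
    fun q => ∫ δ in Set.Ioc ε 1,
      φ (pnorm (p - q) / δ) * (Real.cos ((A p - A q) / pnorm (p - q)) * H (p - q)) / δ
    with hGdef
  have hf2int : Integrable
      (fun z : ℝ × (EuclideanSpace ℝ (Fin (n-1)) × ℝ) =>
        φ (pnorm (p - z.2) / z.1) *
          (Real.cos ((A p - A z.2) / pnorm (p - z.2)) * H (p - z.2)) / z.1)
      ((volume.restrict (Set.Ioc ε 1)).prod volume) := by
    have hUopen : IsOpen {z : ℝ × (EuclideanSpace ℝ (Fin (n-1)) × ℝ) | z.1 ≠ 0 ∧ z.2 ≠ p} := by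
      have hU : {z : ℝ × (EuclideanSpace ℝ (Fin (n-1)) × ℝ) | z.1 ≠ 0 ∧ z.2 ≠ p}
          = ((fun z : ℝ × (EuclideanSpace ℝ (Fin (n-1)) × ℝ) => z.1) ⁻¹' {x | x ≠ 0}) ∩
            ((fun z : ℝ × (EuclideanSpace ℝ (Fin (n-1)) × ℝ) => z.2) ⁻¹' {q | q ≠ p}) := rfl
      rw [hU]
      exact (isOpen_ne.preimage continuous_fst).inter (isOpen_ne.preimage continuous_snd)
    have hrz : Continuous (fun z : ℝ × (EuclideanSpace ℝ (Fin (n-1)) × ℝ) =>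
        pnorm (p - z.2)) := continuous_pnorm.comp (continuous_const.sub continuous_snd)
    have hco : ContinuousOn (fun z : ℝ × (EuclideanSpace ℝ (Fin (n-1)) × ℝ) =>
        φ (pnorm (p - z.2) / z.1) *
          (Real.cos ((A p - A z.2) / pnorm (p - z.2)) * H (p - z.2)) / z.1)
        {z : ℝ × (EuclideanSpace ℝ (Fin (n-1)) × ℝ) | z.1 ≠ 0 ∧ z.2 ≠ p} := by
      apply ContinuousOn.div
      · apply ContinuousOn.mul
        · apply hφsm.continuous.comp_continuousOn
          apply ContinuousOn.div hrz.continuousOn continuous_fst.continuousOn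
          intro z hz; exact hz.1
        · apply ContinuousOn.mul
          · apply Real.continuous_cos.comp_continuousOn
            apply ContinuousOn.div
              (continuous_const.sub (hAcont.comp continuous_snd)).continuousOn
              hrz.continuousOn
            intro z hz
            exact ne_of_gt (hrpos z.2 hz.2)
          · apply ContinuousOn.comp hCZ.1.continuousOn
              (continuous_const.sub continuous_snd).continuousOn
            intro z hz; exact sub_ne_zero.2 (Ne.symm hz.2)
      · exact continuous_fst.continuousOn
      · intro z hz; exact hz.1
    have hcompl0 : ((volume.restrict (Set.Ioc ε 1)).prod volume)
        {z : ℝ × (EuclideanSpace ℝ (Fin (n-1)) × ℝ) |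
          ¬ (z ∈ {z : ℝ × (EuclideanSpace ℝ (Fin (n-1)) × ℝ) | z.1 ≠ 0 ∧ z.2 ≠ p})} = 0 := by
      apply measure_mono_null
        (t := (({(0:ℝ)} : Set ℝ) ×ˢ (Set.univ : Set (EuclideanSpace ℝ (Fin (n-1)) × ℝ))) ∪
          ((Set.univ : Set ℝ) ×ˢ ({p} : Set (EuclideanSpace ℝ (Fin (n-1)) × ℝ))))
      · intro z hz
        simp only [Set.mem_setOf_eq, not_and_or, not_not, ne_eq] at hz
        rcases hz with h | h
        · exact Or.inl ⟨by simpa using h, trivial⟩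
        · exact Or.inr ⟨trivial, by simpa using h⟩
      · apply measure_union_null
        · rw [Measure.prod_prod]
          have h1 : (volume.restrict (Set.Ioc ε 1)) ({(0:ℝ)} : Set ℝ) = 0 := by
            rw [Measure.restrict_apply (measurableSet_singleton 0)]
            exact measure_mono_null Set.inter_subset_left Real.volume_singleton
          rw [h1, zero_mul]
        · rw [Measure.prod_prod, hsing, mul_zero]
    have haemem : ∀ᵐ z ∂((volume.restrict (Set.Ioc ε 1)).prod volume),
        z ∈ {z : ℝ × (EuclideanSpace ℝ (Fin (n-1)) × ℝ) | z.1 ≠ 0 ∧ z.2 ≠ p} := by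
      rw [MeasureTheory.ae_iff]
      exact hcompl0
    have hae : AEStronglyMeasurable (fun z : ℝ × (EuclideanSpace ℝ (Fin (n-1)) × ℝ) =>
        φ (pnorm (p - z.2) / z.1) *
          (Real.cos ((A p - A z.2) / pnorm (p - z.2)) * H (p - z.2)) / z.1)
        ((volume.restrict (Set.Ioc ε 1)).prod volume) := by
      have h1 := hco.aestronglyMeasurable
        (μ := (volume.restrict (Set.Ioc ε 1)).prod volume) hUopen.measurableSet
      rwa [Measure.restrict_eq_self_of_ae_mem haemem] at h1
    have hDm : MeasurableSet {q : EuclideanSpace ℝ (Fin (n-1)) × ℝ | pnorm (p - q) ≤ 1} :=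
      (isClosed_Iic.preimage hrcont).measurableSet
    have hprodfin : ((volume.restrict (Set.Ioc ε 1)).prod volume)
        ((Set.univ : Set ℝ) ×ˢ {q : EuclideanSpace ℝ (Fin (n-1)) × ℝ | pnorm (p - q) ≤ 1})
        < ⊤ := by
      rw [Measure.prod_prod]
      apply ENNReal.mul_lt_top
      · rw [Measure.restrict_apply_univ, Real.volume_Ioc]
        exact ENNReal.ofReal_lt_top
      · exact volume_pnorm_lt_top p zero_le_one (fun q hq => hq)
    have hgint2 : Integrable
        (((Set.univ : Set ℝ) ×ˢ {q : EuclideanSpace ℝ (Fin (n-1)) × ℝ | pnorm (p - q) ≤ 1}).indicator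
          (fun _ => Φ * (C00 / (ε/4) ^ (n+1)) * ε⁻¹))
        ((volume.restrict (Set.Ioc ε 1)).prod volume) :=
      (integrable_indicator_iff (MeasurableSet.univ.prod hDm)).2
        (integrableOn_const hprodfin.ne)
    have hfull : ∀ᵐ z : ℝ × (EuclideanSpace ℝ (Fin (n-1)) × ℝ)
        ∂((volume.restrict (Set.Ioc ε 1)).prod volume), z.1 ∈ Set.Ioc ε 1 := by
      rw [MeasureTheory.ae_iff]
      apply measure_mono_null
        (t := ((Set.Ioc ε 1)ᶜ ×ˢ (Set.univ : Set (EuclideanSpace ℝ (Fin (n-1)) × ℝ))))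
      · intro z hz; exact ⟨hz, trivial⟩
      · rw [Measure.prod_prod]
        have h1 : (volume.restrict (Set.Ioc ε 1)) ((Set.Ioc ε 1)ᶜ) = 0 := by
          rw [Measure.restrict_apply measurableSet_Ioc.compl]
          simp
        rw [h1, zero_mul]
    refine Integrable.mono' hgint2 hae ?_
    filter_upwards [hfull] with z hz
    by_cases h0 : φ (pnorm (p - z.2) / z.1) = 0
    · simp only [h0, zero_mul, zero_div, norm_zero]
      exact Set.indicator_nonneg (fun _ _ => by positivity) z
    · have hmem2 : pnorm (p - z.2) / z.1 ∈ Set.Ioo (4⁻¹:ℝ) 1 := by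
        by_contra hmm; exact h0 (phi_vanish hφsupp hmm)
      have hz1 : 0 < z.1 := lt_trans hε0 hz.1
      have hr1 : pnorm (p - z.2) < z.1 := (div_lt_one hz1).1 hmem2.2
      have hr2' := (lt_div_iff₀ hz1).1 hmem2.1
      have hrlow : ε/4 < pnorm (p - z.2) := by nlinarith [hz.1]
      have hne2 : z.2 ≠ p := hqnep z.2 (by linarith)
      have hmemD : z ∈ (Set.univ : Set ℝ) ×ˢ
          {q : EuclideanSpace ℝ (Fin (n-1)) × ℝ | pnorm (p - q) ≤ 1} :=
        ⟨trivial, show pnorm (p - z.2) ≤ 1 from le_trans hr1.le hz.2⟩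
      rw [Set.indicator_of_mem hmemD]
      have hKz2 : |Kf z.2| ≤ C00 / (ε/4) ^ (n+1) := by
        refine le_trans (hKb z.2 hne2) ?_
        gcongr
      have hKz3 : |Real.cos ((A p - A z.2) / pnorm (p - z.2)) * H (p - z.2)|
          ≤ C00 / (ε/4) ^ (n+1) := hKz2
      calc ‖φ (pnorm (p - z.2) / z.1) *
            (Real.cos ((A p - A z.2) / pnorm (p - z.2)) * H (p - z.2)) / z.1‖
          = |φ (pnorm (p - z.2) / z.1)| *
              |Real.cos ((A p - A z.2) / pnorm (p - z.2)) * H (p - z.2)| / z.1 := by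
            rw [Real.norm_eq_abs, abs_div, abs_mul, abs_of_pos hz1]
        _ ≤ Φ * (C00 / (ε/4) ^ (n+1)) / ε := by
            gcongr
            all_goals first
              | exact hΦ _
              | exact hKz3
              | exact hz.1.le
              | positivity
        _ = Φ * (C00 / (ε/4) ^ (n+1)) * ε⁻¹ := by rw [div_eq_mul_inv]
  have hGint : Integrable G := hf2int.integral_prod_right
  have e2 : (∫ δ in Set.Ioc ε 1,
      (∫ q : EuclideanSpace ℝ (Fin (n-1)) × ℝ, φ (pnorm (p - q) / δ) *
        Real.cos ((A p - A q) / pnorm (p - q)) * H (p - q)) / δ) = ∫ q, G q := by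
    have hstep : ∀ δ : ℝ,
        (∫ q : EuclideanSpace ℝ (Fin (n-1)) × ℝ, φ (pnorm (p - q) / δ) *
          Real.cos ((A p - A q) / pnorm (p - q)) * H (p - q)) / δ
        = ∫ q : EuclideanSpace ℝ (Fin (n-1)) × ℝ, φ (pnorm (p - q) / δ) *
          (Real.cos ((A p - A q) / pnorm (p - q)) * H (p - q)) / δ := by
      intro δ
      rw [← integral_div]
      congr 1
      funext q
      ring
    calc (∫ δ in Set.Ioc ε 1,
        (∫ q : EuclideanSpace ℝ (Fin (n-1)) × ℝ, φ (pnorm (p - q) / δ) *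
          Real.cos ((A p - A q) / pnorm (p - q)) * H (p - q)) / δ)
        = ∫ δ in Set.Ioc ε 1, ∫ q : EuclideanSpace ℝ (Fin (n-1)) × ℝ,
            φ (pnorm (p - q) / δ) *
              (Real.cos ((A p - A q) / pnorm (p - q)) * H (p - q)) / δ := by
          exact setIntegral_congr_fun measurableSet_Ioc (fun δ _ => hstep δ)
      _ = ∫ q, G q := integral_integral_swap hf2int
  have hGb : ∀ q : EuclideanSpace ℝ (Fin (n-1)) × ℝ, q ≠ p →
      ‖G q‖ ≤ 3 * Φ * (C00 / pnorm (p - q) ^ (n+1)) := by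
    intro q hq
    have h1 := key_phi_int_bound hφsm.continuous hφsupp hΦ
      (c := Kf q) hε0 (hrpos q hq)
    refine le_trans h1 ?_
    have := hKb q hq
    have h3Φ : 0 ≤ 3 * Φ := by linarith
    exact mul_le_mul_of_nonneg_left this h3Φ
  -- the two error annuli
  set S1 := {q : EuclideanSpace ℝ (Fin (n-1)) × ℝ | ε/4 < pnorm (p - q) ∧ pnorm (p - q) ≤ ε}
    with hS1def
  set S2 := {q : EuclideanSpace ℝ (Fin (n-1)) × ℝ | 4⁻¹ < pnorm (p - q) ∧ pnorm (p - q) ≤ 12}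
    with hS2def
  have hS1m : MeasurableSet S1 := by
    have : S1 = {q : EuclideanSpace ℝ (Fin (n-1)) × ℝ | ε/4 < pnorm (p - q)} ∩
        {q | pnorm (p - q) ≤ ε} := by
      ext q; simp [hS1def, Set.mem_setOf_eq, Set.mem_inter_iff]
    rw [this]
    exact ((isOpen_Ioi.preimage hrcont).measurableSet).inter
      ((isClosed_Iic.preimage hrcont).measurableSet)
  have hS2m : MeasurableSet S2 := by
    have : S2 = {q : EuclideanSpace ℝ (Fin (n-1)) × ℝ | (4:ℝ)⁻¹ < pnorm (p - q)} ∩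
        {q | pnorm (p - q) ≤ 12} := by
      ext q; simp [hS2def, Set.mem_setOf_eq, Set.mem_inter_iff]
    rw [this]
    exact ((isOpen_Ioi.preimage hrcont).measurableSet).inter
      ((isClosed_Iic.preimage hrcont).measurableSet)
  set c1 : ℝ := 3 * Φ * (C00 / (ε/4) ^ (n+1)) with hc1def
  set c2 : ℝ := (1 + 3 * Φ) * (C00 * 4 ^ (n+1)) with hc2def
  have hc1nn : 0 ≤ c1 := by
    rw [hc1def]; positivity
  have hc2nn : 0 ≤ c2 := by
    rw [hc2def]; positivity
  set hfun : EuclideanSpace ℝ (Fin (n-1)) × ℝ → ℝ :=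
    fun q => S1.indicator (fun _ => c1) q + S2.indicator (fun _ => c2) q with hhfdef
  have hS1sub : S1 ⊆ {q : EuclideanSpace ℝ (Fin (n-1)) × ℝ | pnorm (p - q) ≤ ε} :=
    fun q hq => hq.2
  have hS2sub : S2 ⊆ {q : EuclideanSpace ℝ (Fin (n-1)) × ℝ | pnorm (p - q) ≤ 12} :=
    fun q hq => hq.2
  have hind1 : Integrable (S1.indicator (fun _ => c1)) :=
    (integrable_indicator_iff hS1m).2 (integrableOn_const
      ((volume_pnorm_lt_top p hε0.le hS1sub).ne))
  have hind2 : Integrable (S2.indicator (fun _ => c2)) :=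
    (integrable_indicator_iff hS2m).2 (integrableOn_const
      ((volume_pnorm_lt_top p (by norm_num) hS2sub).ne))
  have hhint : Integrable hfun := hind1.add hind2
  have hpoint : ∀ q, ‖F1 q - G q‖ ≤ hfun q := by
    intro q
    have hfnn : 0 ≤ hfun q := by
      rw [hhfdef]
      exact add_nonneg (Set.indicator_nonneg (fun _ _ => hc1nn) q)
        (Set.indicator_nonneg (fun _ _ => hc2nn) q)
    have hr0 : 0 ≤ pnorm (p - q) := pnorm_nonneg _
    rcases le_or_gt (pnorm (p - q)) (ε/4) with hcase1 | hcase1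
    · -- both vanish
      have hF0 : F1 q = 0 := by
        rw [hF1def]
        simp only
        apply Set.indicator_of_notMem
        rw [hSdef]
        simp only [Set.mem_setOf_eq, not_lt]
        linarith
      have hG0 : G q = 0 := by
        rw [hGdef]
        exact phi_int_zero_of_small hφsupp hr0 (by linarith)
      rw [hF0, hG0, sub_zero, norm_zero]
      exact hfnn
    rcases le_or_gt (pnorm (p - q)) ε with hcase2 | hcase2
    · -- inner annulus : q ∈ S1
      have hqp : q ≠ p := hqnep q (by linarith)
      have hF0 : F1 q = 0 := by
        rw [hF1def]
        simp only
        apply Set.indicator_of_notMem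
        rw [hSdef]
        simp only [Set.mem_setOf_eq, not_lt]
        linarith
      have hGle : ‖G q‖ ≤ c1 := by
        refine le_trans (hGb q hqp) ?_
        rw [hc1def]
        gcongr
      have hq1 : q ∈ S1 := by
        rw [hS1def]; exact ⟨hcase1, hcase2⟩
      have hind2nn : (0:ℝ) ≤ S2.indicator (fun _ => c2) q :=
        Set.indicator_nonneg (fun _ _ => hc2nn) q
      calc ‖F1 q - G q‖ = ‖G q‖ := by rw [hF0, zero_sub, norm_neg]
        _ ≤ c1 := hGle
        _ ≤ hfun q := by
            rw [hhfdef]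
            simp only
            rw [Set.indicator_of_mem hq1]
            linarith
    rcases le_or_gt (pnorm (p - q)) 4⁻¹ with hcase3 | hcase3
    · -- middle region, exact cancellation
      have hqp : q ≠ p := hqnep q (by linarith)
      have hqS : q ∈ S := by rw [hSdef]; exact hcase2
      have hF : F1 q = Kf q := by
        rw [hF1def]
        simp only
        rw [Set.indicator_of_mem hqS, hη1' q hcase3, mul_one]
      have hG : G q = Kf q := by
        rw [hGdef]
        simp only
        have hfact : (∫ δ in Set.Ioc ε 1, φ (pnorm (p - q) / δ) *
              (Real.cos ((A p - A q) / pnorm (p - q)) * H (p - q)) / δ)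
            = ∫ δ in Set.Ioc ε 1, (φ (pnorm (p - q) / δ) / δ) *
              (Real.cos ((A p - A q) / pnorm (p - q)) * H (p - q)) := by
          apply setIntegral_congr_fun measurableSet_Ioc
          intro δ _
          ring
        rw [hfact, integral_mul_const, psi_eq_one hφsupp hφint hε0 hcase2 hcase3, one_mul]
      rw [hF, hG, sub_self, norm_zero]
      exact hfnn
    rcases le_or_gt (pnorm (p - q)) 12 with hcase4 | hcase4
    · -- outer annulus : q ∈ S2
      have hqp : q ≠ p := hqnep q (by linarith)
      have hb4 : C00 / pnorm (p - q) ^ (n+1) ≤ C00 * 4 ^ (n+1) := by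
        have h1 : C00 / pnorm (p - q) ^ (n+1) ≤ C00 / ((4:ℝ)⁻¹) ^ (n+1) := by
          gcongr
        refine le_trans h1 ?_
        rw [inv_pow, div_eq_mul_inv, inv_inv]
      have hFb : ‖F1 q‖ ≤ C00 * 4 ^ (n+1) := by
        rw [hF1def]
        simp only
        by_cases hq : q ∈ S
        · rw [Set.indicator_of_mem hq]
          have hη : |η q| ≤ 1 := by
            rw [abs_of_nonneg (hη01 q).1]; exact (hη01 q).2
          calc ‖Kf q * η q‖ = |Kf q| * |η q| := by rw [Real.norm_eq_abs, abs_mul]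
            _ ≤ (C00 / pnorm (p - q) ^ (n+1)) * 1 :=
                mul_le_mul (hKb q hqp) hη (abs_nonneg _)
                  (div_nonneg hC00nn (pow_nonneg hr0 _))
            _ = C00 / pnorm (p - q) ^ (n+1) := mul_one _
            _ ≤ C00 * 4 ^ (n+1) := hb4
        · rw [Set.indicator_of_notMem hq, norm_zero]
          positivity
      have hGb2 : ‖G q‖ ≤ 3 * Φ * (C00 * 4 ^ (n+1)) := by
        refine le_trans (hGb q hqp) ?_
        exact mul_le_mul_of_nonneg_left hb4 (by positivity)
      have hq2 : q ∈ S2 := by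
        rw [hS2def]; exact ⟨hcase3, hcase4⟩
      have hind1nn : (0:ℝ) ≤ S1.indicator (fun _ => c1) q :=
        Set.indicator_nonneg (fun _ _ => hc1nn) q
      calc ‖F1 q - G q‖ ≤ ‖F1 q‖ + ‖G q‖ := norm_sub_le _ _
        _ ≤ C00 * 4 ^ (n+1) + 3 * Φ * (C00 * 4 ^ (n+1)) := add_le_add hFb hGb2
        _ = c2 := by rw [hc2def]; ring
        _ ≤ hfun q := by
            rw [hhfdef]
            simp only
            rw [Set.indicator_of_mem hq2]
            linarith
    · -- far away : both vanish
      have hF0 : F1 q = 0 := by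
        rw [hF1def]
        simp only
        by_cases hq : q ∈ S
        · rw [Set.indicator_of_mem hq, hηz q (by linarith), mul_zero]
        · exact Set.indicator_of_notMem hq _
      have hG0 : G q = 0 := by
        rw [hGdef]
        exact phi_int_zero_of_one_le hφsupp hε0 (by linarith)
      rw [hF0, hG0, sub_zero, norm_zero]
      exact hfnn
  -- putting everything together
  rw [e1, e2, ← integral_sub hF1int hGint]
  calc |∫ q, (F1 q - G q)|
      ≤ ∫ q, ‖F1 q - G q‖ := by
        rw [← Real.norm_eq_abs]
        exact norm_integral_le_integral_norm _
    _ ≤ ∫ q, hfun q := integral_mono (hF1int.sub hGint).norm hhint hpoint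
    _ = (volume S1).toReal • c1 + (volume S2).toReal • c2 := by
        rw [hhfdef]
        rw [integral_add hind1 hind2, integral_indicator_const _ hS1m,
          integral_indicator_const _ hS2m]
        rfl
    _ ≤ (kap (n-1) * ε ^ (n+1)) * c1 + (kap (n-1) * 12 ^ (n+1)) * c2 := by
        have hv1 : (volume S1).toReal ≤ kap (n-1) * ε ^ ((n-1)+2) :=
          volume_pnorm_toReal_le p hε0.le hS1sub
        have hv2 : (volume S2).toReal ≤ kap (n-1) * 12 ^ ((n-1)+2) :=
          volume_pnorm_toReal_le p (by norm_num) hS2sub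
        rw [hm2] at hv1 hv2
        simp only [smul_eq_mul]
        exact add_le_add (mul_le_mul_of_nonneg_right hv1 hc1nn)
          (mul_le_mul_of_nonneg_right hv2 hc2nn)
    _ = C00 * kap (n-1) * 4 ^ (n+1) * (3 * Φ + (1 + 3 * Φ) * 12 ^ (n+1)) := by
        rw [hc1def, hc2def]
        have hεne : ε ^ (n+1) ≠ 0 := pow_ne_zero _ (ne_of_gt hε0)
        have h4 : ((1:ℝ) / 4) ^ n * 4 ^ n = 1 := by rw [← mul_pow]; norm_num
        field_simp
        linear_combination (-(kap (n - 1) * C00 * ε * ε ^ n * Φ * 3)) * h4
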